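/- (Invariant of the abstract path-fixing algorithm) After the abstract fixing procedure processes the nodes p_1, ..., p_i of a path P (at each step j ≤ i, pushing a maximum flow with limit |inflow(p_j)| from p_j to p_{j+1} if inflow(p_j) > 0, or from p_{j+1} to p_j if inflow(p_j) < 0, while darts between unprocessed consecutive nodes have capacity increased by M, the sum of all original capacities), the following holds: (1) for j ≤ i and j' > j, if p_j has positive inflow there is no residual path from p_j to p_{j'}, and if p_j has negative inflow there is no residual path from p_{j'} to p_j; (2) for j, j' ≤ i, if p_j has positive inflow and p_{j'} has negative inflow then there is no residual p_j-to-p_{j'} path. -/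

import Mathlib

/-- A directed graph given by darts: each dart has a tail, a head, and a reverse dart. -/
structure Dgraph (V D : Type) where
  tail : D → V
  head : D → V
  rev : D → D
  rev_rev : ∀ d, rev (rev d) = d
  tail_rev : ∀ d, tail (rev d) = head d
  head_rev : ∀ d, head (rev d) = tail d

namespace Dgraph

variable {V D : Type}

/-- an antisymmetric flow assignment -/
def Antisym (G : Dgraph V D) (f : D → ℝ) : Prop :=
  ∀ d, f (G.rev d) = - f d

/-- net inflow of a flow assignment at a node -/
noncomputable def inflow [Fintype D] [DecidableEq V] (G : Dgraph V D) (f : D → ℝ) (v : V) : ℝ :=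
  ∑ d ∈ Finset.univ.filter (fun d => G.head d = v), f d

/-- one step along a dart of strictly positive capacity -/
def ResStep (G : Dgraph V D) (cap : D → ℝ) (u v : V) : Prop :=
  ∃ d, G.tail d = u ∧ G.head d = v ∧ 0 < cap d

/-- existence of a path all of whose darts have strictly positive capacity -/
def ResReach (G : Dgraph V D) (cap : D → ℝ) (u v : V) : Prop :=
  Relation.ReflTransGen (G.ResStep cap) u v

/-- a pseudoflow: antisymmetric and respecting all capacities -/
def Pseudoflow (G : Dgraph V D) (c f : D → ℝ) : Prop :=
  G.Antisym f ∧ ∀ d, f d ≤ c d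

end Dgraph

namespace Dgraph

variable {V D : Type} [Fintype D] [DecidableEq V] [DecidableEq D]

/-- `g` is a maximum feasible flow from `a` to `b` with limit `x` (w.r.t. capacities `cap`). -/
def MaxLimFlow (G : Dgraph V D) (cap : D → ℝ) (a b : V) (x : ℝ) (g : D → ℝ) : Prop :=
  G.Antisym g ∧ (∀ d, g d ≤ cap d) ∧
  (∀ v, v ≠ a → v ≠ b → G.inflow g v = 0) ∧
  G.inflow g b ≤ x ∧
  ∀ g' : D → ℝ, G.Antisym g' → (∀ d, g' d ≤ cap d) →
    (∀ v, v ≠ a → v ≠ b → G.inflow g' v = 0) →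
    G.inflow g' b ≤ x → G.inflow g' b ≤ G.inflow g b

/-- capacities at stage `i` of the abstract fixing procedure: darts of the path with
index at least `i` (and their reverses) still carry the extra capacity `M`. -/
noncomputable def fixCaps (G : Dgraph V D) (c0 : D → ℝ) (M : ℝ) {k : ℕ}
    (dP : Fin k → D) (i : ℕ) (d : D) : ℝ :=
  c0 d + (if ∃ j : Fin k, i ≤ (j : ℕ) ∧ (d = dP j ∨ d = G.rev (dP j)) then M else 0)

/-- restoring the capacity of the dart `d0` and of `rev d0`: truncate the flow on each
of them in turn to the (restored) capacity `κ`, keeping antisymmetry. -/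
noncomputable def truncAt (G : Dgraph V D) (κ : D → ℝ) (f : D → ℝ) (d0 : D) : D → ℝ :=
  let m := min (f d0) (κ d0)
  let f1 := Function.update (Function.update f d0 m) (G.rev d0) (-m)
  let m2 := min (f1 (G.rev d0)) (κ (G.rev d0))
  Function.update (Function.update f1 (G.rev d0) m2) d0 (-m2)

/-- one iteration of the abstract fixing procedure at position `i`: restore the
capacities of `d_i` and `rev d_i`, then push a maximum flow with limit `|inflow(p_i)|`
from `p_i` to `p_{i+1}` (if the inflow at `p_i` is positive) or from `p_{i+1}` to `p_i`
(otherwise). -/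
noncomputable def FixStep (G : Dgraph V D) (c0 : D → ℝ) (M : ℝ) {k : ℕ}
    (p : Fin (k+1) → V) (dP : Fin k → D) (i : Fin k) (f f' : D → ℝ) : Prop :=
  ∃ t g : D → ℝ,
    t = G.truncAt (G.fixCaps c0 M dP ((i : ℕ) + 1)) f (dP i) ∧
    ((0 < G.inflow t (p i.castSucc) ∧
        G.MaxLimFlow (fun d => G.fixCaps c0 M dP ((i : ℕ) + 1) d - t d)
          (p i.castSucc) (p i.succ) (G.inflow t (p i.castSucc)) g) ∨
     (G.inflow t (p i.castSucc) ≤ 0 ∧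
        G.MaxLimFlow (fun d => G.fixCaps c0 M dP ((i : ℕ) + 1) d - t d)
          (p i.succ) (p i.castSucc) (-(G.inflow t (p i.castSucc))) g)) ∧
    f' = fun d => t d + g d

end Dgraph

/-!
Reversing every dart negates inflows and reverses residual paths, so the claims about nodes
of negative inflow are the claims about nodes of positive inflow in the reversed graph, and
both are carried through the iterations together. Claim (2) follows from claim (1).

Truncating the flow on `d_i` and restoring its capacity only removes residual darts. Pushing a
flow `g` into a sink `b` creates no residual path from a node `s` that could not reach `b`: the
set `R` of nodes residually reachable from `s` has no residual dart leaving it, and since `g`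
has nonpositive net inflow into `R`, it must vanish on all darts leaving `R`.

For the node `p_i` just processed, a positive remaining inflow means the maximum flow stayed
below its limit, so no residual path leads from `p_i` to `p_{i+1}`. Were some later `p_j'`
reachable, take `m ≥ i + 1` with `p_m` unreachable and `p_{m+1}` reachable. Then the reverse
of `d_m` is saturated at capacity `c(rev d_m) + M`, so the flow into `X = {p_l | l > m}`
through `d_m` is at least `M` below that of `f₀`. The inflows at the nodes of `X` are still
those of `f₀`, so the other darts entering `X` carry together at least `M` more than under
`f₀`. As `M` is the total capacity, they are all saturated and no residual path enters `X`.
-/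

open Filter Topology in
theorem exists_pos_mul_le {ι : Type*} [Finite ι] {r φ : ι → ℝ} (hr : ∀ i, 0 ≤ r i)
    (hφ : ∀ i, 0 < φ i → 0 < r i) {δ : ℝ} (hδ : 0 < δ) :
    ∃ ε, 0 < ε ∧ ε ≤ δ ∧ ∀ i, ε * φ i ≤ r i := by
  have hsmall : ∀ i, ∀ᶠ ε in 𝓝[>] (0 : ℝ), ε * φ i ≤ r i := by
    intro i
    rcases le_or_gt (φ i) 0 with hi | hi
    · exact eventually_nhdsWithin_of_forall fun ε hε =>
        (mul_nonpos_of_nonneg_of_nonpos (le_of_lt hε) hi).trans (hr i)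
    · have ht : Tendsto (fun ε => ε * φ i) (𝓝[>] 0) (𝓝 0) :=
        ((continuous_mul_const (φ i)).tendsto' 0 0 (zero_mul _)).mono_left nhdsWithin_le_nhds
      exact (ht.eventually (gt_mem_nhds (hφ i hi))).mono fun ε hε => hε.le
  exact (eventually_mem_nhdsWithin.and (((eventually_le_nhds hδ).filter_mono nhdsWithin_le_nhds).and
    (eventually_all.2 hsmall))).exists

theorem Fin.exists_not_castSucc_and_succ {k : ℕ} {P : Fin (k+1) → Prop} {s l : Fin (k+1)}
    (hs : ¬ P s) (hl : P l) (hsl : s ≤ l) : ∃ m : Fin k, s ≤ m.castSucc ∧ m.castSucc < l ∧ ¬ P m.castSucc ∧ P m.succ := by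
  induction l using Fin.induction with
  | zero => exact absurd (le_antisymm hsl (Fin.zero_le s) ▸ hl) hs
  | succ i ih =>
    have hsi : s ≤ i.castSucc :=
      Fin.le_castSucc_iff.2 (lt_of_le_of_ne hsl fun h => hs (h ▸ hl))
    by_cases hi : P i.castSucc
    · obtain ⟨m, h1, h2, h3, h4⟩ := ih hi hsi
      exact ⟨m, h1, h2.trans Fin.castSucc_lt_succ, h3, h4⟩
    · exact ⟨i, hsi, Fin.castSucc_lt_succ, hi, hl⟩

namespace Dgraph

open Finset

variable {V D : Type} {k : ℕ}

section Basic

variable (G : Dgraph V D)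

lemma rev_involutive : Function.Involutive G.rev := G.rev_rev

def revPerm : Equiv.Perm D :=
  Function.Involutive.toPerm G.rev G.rev_involutive

@[simp] lemma revPerm_apply (d : D) : G.revPerm d = G.rev d := rfl

lemma revPerm_symm : G.revPerm.symm = G.revPerm :=
  Function.Involutive.toPerm_symm _

end Basic

section Antisym

variable {G : Dgraph V D} {f g : D → ℝ}

lemma Antisym.add (hf : G.Antisym f) (hg : G.Antisym g) : G.Antisym (f + g) := fun d => by
  simp only [Pi.add_apply, hf d, hg d]
  ring

lemma Antisym.sub (hf : G.Antisym f) (hg : G.Antisym g) : G.Antisym (f - g) := fun d => by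
  simp only [Pi.sub_apply, hf d, hg d]
  ring

lemma Antisym.smul (hf : G.Antisym f) (a : ℝ) : G.Antisym (a • f) := fun d => by
  simp [hf d]

lemma Antisym.sum_eq_zero [Fintype D] (hg : G.Antisym g) : ∑ d, g d = 0 := by
  have h := Equiv.sum_comp G.revPerm g
  simp only [revPerm_apply, show ∀ d, g (G.rev d) = -g d from hg, Finset.sum_neg_distrib] at h
  linarith

end Antisym

section Inflow

variable [Fintype D] [DecidableEq V] (G : Dgraph V D)

lemma inflow_add (f g : D → ℝ) (v : V) :
    G.inflow (f + g) v = G.inflow f v + G.inflow g v := by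
  simp [inflow, Finset.sum_add_distrib]

lemma inflow_sub (f g : D → ℝ) (v : V) :
    G.inflow (f - g) v = G.inflow f v - G.inflow g v := by
  simp [inflow, Finset.sum_sub_distrib]

lemma inflow_smul (a : ℝ) (f : D → ℝ) (v : V) : G.inflow (a • f) v = a * G.inflow f v := by
  simp [inflow, Finset.mul_sum]

lemma inflow_zero (v : V) : G.inflow 0 v = 0 := by
  simp [inflow]

open Classical in
lemma sum_filter_head_mem (g : D → ℝ) (S : Set V) :
    ∑ d ∈ univ.filter (fun d => G.head d ∈ S), g d
      = ∑ v ∈ (univ.image G.head).filter (· ∈ S), G.inflow g v := by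
  rw [← Finset.sum_fiberwise_of_maps_to (t := (univ.image G.head).filter (· ∈ S))
    (g := G.head) (fun d hd => by simpa using hd)]
  refine Finset.sum_congr rfl fun v hv => ?_
  rw [inflow, Finset.filter_filter]
  refine Finset.sum_congr (Finset.filter_congr fun d _ => ?_) fun _ _ => rfl
  exact ⟨And.right, fun h => ⟨h ▸ (Finset.mem_filter.1 hv).2, h⟩⟩

open Classical in
lemma inflow_add_inflow_eq_zero {g : D → ℝ} (hg : G.Antisym g) {a b : V} (hab : a ≠ b)
    (hcons : ∀ v, v ≠ a → v ≠ b → G.inflow g v = 0) :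
    G.inflow g a + G.inflow g b = 0 := by
  have h := G.sum_filter_head_mem g Set.univ
  simp only [Set.mem_univ, Finset.filter_true, hg.sum_eq_zero] at h
  have hnot : ∀ v ∉ univ.image G.head, G.inflow g v = 0 := fun v hv =>
    Finset.sum_eq_zero fun d hd =>
      absurd (Finset.mem_image.2 ⟨d, mem_univ d, by simpa using hd⟩) hv
  rwa [Finset.sum_eq_add a b hab (fun v _ hv => hcons v hv.1 hv.2) (hnot a) (hnot b),
    eq_comm] at h

end Inflow

section Reverse

variable (G : Dgraph V D)

def reverse : Dgraph V D where
  tail := G.head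
  head := G.tail
  rev := G.rev
  rev_rev := G.rev_rev
  tail_rev := G.head_rev
  head_rev := G.tail_rev

@[simp] lemma reverse_tail : G.reverse.tail = G.head := rfl

@[simp] lemma reverse_head : G.reverse.head = G.tail := rfl

@[simp] lemma reverse_rev : G.reverse.rev = G.rev := rfl

lemma resReach_reverse {c : D → ℝ} {u v : V} :
    G.reverse.ResReach c u v ↔ G.ResReach c v u := by
  have h : G.reverse.ResStep c = Function.swap (G.ResStep c) := by
    ext u v
    exact ⟨fun ⟨d, h1, h2, h3⟩ => ⟨d, h2, h1, h3⟩, fun ⟨d, h1, h2, h3⟩ => ⟨d, h2, h1, h3⟩⟩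
  rw [ResReach, h, Relation.reflTransGen_swap, ResReach]

lemma inflow_reverse [Fintype D] [DecidableEq V] {f : D → ℝ} (hf : G.Antisym f) (v : V) :
    G.reverse.inflow f v = -G.inflow f v := by
  rw [inflow, inflow, Finset.sum_filter, Finset.sum_filter, ← Equiv.sum_comp G.revPerm,
    ← Finset.sum_neg_distrib]
  refine Finset.sum_congr rfl fun d _ => ?_
  simp only [reverse_head, revPerm_apply, G.tail_rev, hf d]
  split_ifs <;> simp

end Reverse

section Residual

variable {G : Dgraph V D}

lemma resReach_mono {c c' : D → ℝ} (h : ∀ d, 0 < c d → 0 < c' d) {u v : V}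
    (huv : G.ResReach c u v) : G.ResReach c' u v :=
  Relation.ReflTransGen.mono (fun _ _ ⟨d, h1, h2, h3⟩ => ⟨d, h1, h2, h d h3⟩) _ _ huv

def ResClosed (G : Dgraph V D) (c : D → ℝ) (S : Set V) : Prop :=
  ∀ d, G.tail d ∈ S → G.head d ∉ S → c d ≤ 0

lemma resClosed_setOf_resReach (c : D → ℝ) (u : V) :
    G.ResClosed c {v | G.ResReach c u v} := fun d ht hh =>
  not_lt.1 fun hd => hh (Relation.ReflTransGen.tail ht ⟨d, rfl, rfl, hd⟩)

lemma ResClosed.mem_of_resReach {c : D → ℝ} {S : Set V} (hS : G.ResClosed c S) {u v : V}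
    (hu : u ∈ S) (huv : G.ResReach c u v) : v ∈ S := by
  induction huv with
  | refl => exact hu
  | tail _ hstep ih =>
    obtain ⟨d, rfl, rfl, hd⟩ := hstep
    by_contra hh
    exact (hS d ih hh).not_gt hd

end Residual

section Cut

variable [Fintype D] {G : Dgraph V D}

open Classical in
noncomputable def inDarts (G : Dgraph V D) (S : Set V) : Finset D :=
  univ.filter fun d => G.head d ∈ S ∧ G.tail d ∉ S

lemma mem_inDarts {S : Set V} {d : D} : d ∈ G.inDarts S ↔ G.head d ∈ S ∧ G.tail d ∉ S := by
  simp [inDarts]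

lemma rev_not_mem_inDarts {S : Set V} {d : D} (hd : d ∈ G.inDarts S) :
    G.rev d ∉ G.inDarts S := by
  rw [mem_inDarts, G.head_rev]
  exact fun h => (mem_inDarts.1 hd).2 h.1

lemma reverse_inDarts (S : Set V) :
    G.reverse.inDarts S = (G.inDarts S).map G.revPerm.toEmbedding := by
  ext d
  rw [Finset.mem_map_equiv, revPerm_symm, revPerm_apply, mem_inDarts, mem_inDarts, G.head_rev,
    G.tail_rev]
  rfl

lemma sum_inDarts_reverse {g : D → ℝ} (hg : G.Antisym g) (S : Set V) :
    ∑ d ∈ G.reverse.inDarts S, g d = -∑ d ∈ G.inDarts S, g d := by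
  rw [reverse_inDarts, Finset.sum_map, ← Finset.sum_neg_distrib]
  exact Finset.sum_congr rfl fun d _ => hg d

variable [DecidableEq V]

open Classical in
lemma sum_inDarts_eq {g : D → ℝ} (hg : G.Antisym g) (S : Set V) :
    ∑ d ∈ G.inDarts S, g d = ∑ v ∈ (univ.image G.head).filter (· ∈ S), G.inflow g v := by
  have hinner : G.Antisym fun d => if G.head d ∈ S ∧ G.tail d ∈ S then g d else 0 := by
    intro d
    simp only [G.head_rev, G.tail_rev, hg d, and_comm]
    split_ifs <;> simp
  have hsplit : ∀ d, (if G.head d ∈ S then g d else 0)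
      = (if G.head d ∈ S ∧ G.tail d ∉ S then g d else 0)
        + (if G.head d ∈ S ∧ G.tail d ∈ S then g d else 0) := by
    intro d
    by_cases h1 : G.head d ∈ S <;> by_cases h2 : G.tail d ∈ S <;> simp [h1, h2]
  rw [← G.sum_filter_head_mem, inDarts, Finset.sum_filter, Finset.sum_filter,
    Finset.sum_congr rfl fun d _ => hsplit d, Finset.sum_add_distrib, hinner.sum_eq_zero, add_zero]

open Classical in
lemma sum_inDarts_nonpos {g : D → ℝ} (hg : G.Antisym g) {S : Set V}
    (h : ∀ v ∈ S, G.inflow g v ≤ 0) : ∑ d ∈ G.inDarts S, g d ≤ 0 := by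
  rw [sum_inDarts_eq hg]
  exact Finset.sum_nonpos fun v hv => h v (Finset.mem_filter.1 hv).2

lemma ResClosed.sub {c g : D → ℝ} {S : Set V} (hS : G.ResClosed c S) (hg : G.Antisym g)
    (hgc : ∀ d, g d ≤ c d) (hin : ∀ v ∈ S, G.inflow g v ≤ 0) : G.ResClosed (c - g) S := by
  have hout : ∀ d ∈ G.reverse.inDarts S, g d ≤ 0 := fun d hd =>
    (hgc d).trans (hS d (mem_inDarts.1 hd).1 (mem_inDarts.1 hd).2)
  have hzero := (Finset.sum_eq_zero_iff_of_nonpos hout).1 <| le_antisymm (Finset.sum_nonpos hout)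
    (by rw [sum_inDarts_reverse hg]; exact neg_nonneg.2 (sum_inDarts_nonpos hg hin))
  intro d ht hh
  rw [Pi.sub_apply, hzero d (mem_inDarts.2 ⟨ht, hh⟩), sub_zero]
  exact hS d ht hh

lemma ResReach.of_sub_of_not_resReach_sink {c g : D → ℝ} {b s x : V} (hg : G.Antisym g)
    (hgc : ∀ d, g d ≤ c d) (hsink : ∀ v ≠ b, G.inflow g v ≤ 0) (hsb : ¬ G.ResReach c s b)
    (h : G.ResReach (c - g) s x) : G.ResReach c s x :=
  ((resClosed_setOf_resReach c s).sub hg hgc fun v hv => hsink v fun hvb => hsb (hvb ▸ hv)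
    ).mem_of_resReach Relation.ReflTransGen.refl h

end Cut

section Augment

variable {G : Dgraph V D}

def dartFlow [DecidableEq D] (G : Dgraph V D) (d : D) : D → ℝ :=
  fun e => (if e = d then 1 else 0) - (if e = G.rev d then 1 else 0)

lemma antisym_dartFlow [DecidableEq D] (d : D) : G.Antisym (G.dartFlow d) := by
  intro e
  simp only [dartFlow, G.rev_involutive.injective.eq_iff, G.rev_involutive.eq_iff]
  ring

variable [Fintype D] [DecidableEq V]

lemma inflow_dartFlow [DecidableEq D] (d : D) (v : V) :
    G.inflow (G.dartFlow d) v
      = (if G.head d = v then 1 else 0) - (if G.tail d = v then 1 else 0) := by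
  simp only [inflow, dartFlow, Finset.sum_sub_distrib, Finset.sum_ite_eq', Finset.mem_filter,
    Finset.mem_univ, true_and, G.head_rev]

lemma ResReach.exists_unitFlow [DecidableEq D] {r : D → ℝ} {a b : V} (h : G.ResReach r a b) :
    ∃ φ : D → ℝ, G.Antisym φ ∧ (∀ d, 0 < φ d → 0 < r d) ∧
      ∀ v, G.inflow φ v = (if b = v then 1 else 0) - (if a = v then 1 else 0) := by
  induction h with
  | refl => exact ⟨0, fun d => by simp, fun d hd => absurd hd (lt_irrefl 0), fun v => by
      simp [inflow_zero]⟩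
  | tail _ hstep ih =>
    obtain ⟨φ, hφ, hsupp, hinfl⟩ := ih
    obtain ⟨d, rfl, rfl, hd⟩ := hstep
    refine ⟨φ + G.dartFlow d, hφ.add (antisym_dartFlow d), fun e he => ?_, fun v => ?_⟩
    · by_cases hed : e = d
      · exact hed ▸ hd
      · have : G.dartFlow d e ≤ 0 := by
          simp only [dartFlow, if_neg hed]
          split_ifs <;> norm_num
        exact hsupp e (by simp only [Pi.add_apply] at he; linarith)
    · rw [inflow_add, hinfl, inflow_dartFlow]
      ring

namespace MaxLimFlow

variable {cap g : D → ℝ} {a b : V} {x : ℝ}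

lemma inflow_source (h : G.MaxLimFlow cap a b x g) (hab : a ≠ b) :
    G.inflow g a = -G.inflow g b :=
  eq_neg_of_add_eq_zero_left (G.inflow_add_inflow_eq_zero h.1 hab h.2.2.1)

lemma inflow_target_nonneg (h : G.MaxLimFlow cap a b x g) (hcap : ∀ d, 0 ≤ cap d)
    (hx : 0 ≤ x) : 0 ≤ G.inflow g b := by
  simpa [inflow_zero] using h.2.2.2.2 0 (fun d => by simp) hcap (fun v _ _ => G.inflow_zero v)
    (by rwa [inflow_zero])

lemma inflow_nonpos_of_ne_target (h : G.MaxLimFlow cap a b x g) (hab : a ≠ b)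
    (hcap : ∀ d, 0 ≤ cap d) (hx : 0 ≤ x) : ∀ v ≠ b, G.inflow g v ≤ 0 := by
  intro v hvb
  by_cases hva : v = a
  · rw [hva, h.inflow_source hab]
    linarith [h.inflow_target_nonneg hcap hx]
  · rw [h.2.2.1 v hva hvb]

lemma inflow_nonneg_of_ne_source (h : G.MaxLimFlow cap a b x g) (hcap : ∀ d, 0 ≤ cap d)
    (hx : 0 ≤ x) : ∀ v ≠ a, 0 ≤ G.inflow g v := by
  intro v hva
  by_cases hvb : v = b
  · exact hvb ▸ h.inflow_target_nonneg hcap hx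
  · rw [h.2.2.1 v hva hvb]

lemma not_resReach [DecidableEq D] (h : G.MaxLimFlow cap a b x g) (hab : a ≠ b)
    (hlt : G.inflow g b < x) :
    ¬ G.ResReach (cap - g) a b := by
  intro hr
  obtain ⟨φ, hφ, hsupp, hinfl⟩ := hr.exists_unitFlow
  obtain ⟨ε, hε, hεx, hεφ⟩ :=
    exists_pos_mul_le (fun d => sub_nonneg.2 (h.2.1 d)) hsupp (sub_pos.2 hlt)
  have hval : G.inflow (g + ε • φ) b = G.inflow g b + ε := by
    rw [inflow_add, inflow_smul, hinfl]
    simp [hab]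
  have hle : ∀ d, (g + ε • φ) d ≤ cap d := fun d => by
    have := hεφ d
    simp only [Pi.add_apply, Pi.smul_apply, smul_eq_mul, Pi.sub_apply] at *
    linarith
  have hcons : ∀ v, v ≠ a → v ≠ b → G.inflow (g + ε • φ) v = 0 := fun v hva hvb => by
    rw [inflow_add, inflow_smul, hinfl, h.2.2.1 v hva hvb]
    simp [Ne.symm hva, Ne.symm hvb]
  have := h.2.2.2.2 _ (h.1.add (hφ.smul ε)) hle hcons (by rw [hval]; linarith)
  linarith

end MaxLimFlow

end Augment

structure IsSimplePath (G : Dgraph V D) (p : Fin (k+1) → V) (dP : Fin k → D) : Prop where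
  injective : Function.Injective p
  tail_eq : ∀ i, G.tail (dP i) = p i.castSucc
  head_eq : ∀ i, G.head (dP i) = p i.succ

namespace IsSimplePath

variable {G : Dgraph V D} {p : Fin (k+1) → V} {dP : Fin k → D}

lemma reverse (hP : G.IsSimplePath p dP) : G.reverse.IsSimplePath p (G.rev ∘ dP) where
  injective := hP.injective
  tail_eq i := by simp [G.head_rev, hP.tail_eq]
  head_eq i := by simp [G.tail_rev, hP.head_eq]

lemma dart_injective (hP : G.IsSimplePath p dP) : Function.Injective dP := fun i j h => by
  have := hP.tail_eq i
  rw [h, hP.tail_eq] at this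
  exact Fin.castSucc_injective _ (hP.injective this).symm

lemma ne_rev (hP : G.IsSimplePath p dP) (i j : Fin k) : dP i ≠ G.rev (dP j) := by
  intro h
  have h1 := hP.tail_eq i
  rw [h, G.tail_rev, hP.head_eq] at h1
  have h2 := hP.head_eq i
  rw [h, G.head_rev, hP.tail_eq] at h2
  have e1 := congrArg Fin.val (hP.injective h1)
  have e2 := congrArg Fin.val (hP.injective h2)
  simp only [Fin.val_succ, Fin.val_castSucc] at e1 e2
  omega

end IsSimplePath

section FixCaps

variable [DecidableEq D] {G : Dgraph V D} {c0 : D → ℝ} {M : ℝ} {dP : Fin k → D}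

lemma fixCaps_reverse : G.reverse.fixCaps c0 M (G.rev ∘ dP) = G.fixCaps c0 M dP := by
  ext n d
  simp only [fixCaps, reverse_rev, Function.comp_apply, G.rev_rev, or_comm]

lemma le_fixCaps (hM : 0 ≤ M) (n : ℕ) (d : D) : c0 d ≤ G.fixCaps c0 M dP n d := by
  unfold fixCaps
  split_ifs <;> linarith

lemma fixCaps_antitone (hM : 0 ≤ M) {n m : ℕ} (h : n ≤ m) (d : D) :
    G.fixCaps c0 M dP m d ≤ G.fixCaps c0 M dP n d := by
  unfold fixCaps
  split_ifs with h1 h2 <;> try linarith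
  exact absurd (h1.imp fun j hj => ⟨h.trans hj.1, hj.2⟩) h2

lemma fixCaps_of_le {n : ℕ} {j : Fin k} (hj : n ≤ j) {d : D} (hd : d = dP j ∨ d = G.rev (dP j)) :
    G.fixCaps c0 M dP n d = c0 d + M := by
  rw [fixCaps, if_pos ⟨j, hj, hd⟩]

lemma fixCaps_of_forall {n : ℕ} {d : D} (h : ∀ j : Fin k, n ≤ j → d ≠ dP j ∧ d ≠ G.rev (dP j)) :
    G.fixCaps c0 M dP n d = c0 d := by
  rw [fixCaps, if_neg, add_zero]
  rintro ⟨j, hj, hd | hd⟩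
  exacts [(h j hj).1 hd, (h j hj).2 hd]

lemma fixCaps_succ_of_ne {i : Fin k} {d : D} (h1 : d ≠ dP i) (h2 : d ≠ G.rev (dP i)) :
    G.fixCaps c0 M dP (i + 1) d = G.fixCaps c0 M dP i d := by
  unfold fixCaps
  congr 1
  refine if_congr ⟨fun ⟨j, hj, hd⟩ => ⟨j, by omega, hd⟩, fun ⟨j, hj, hd⟩ => ⟨j, ?_, hd⟩⟩ rfl rfl
  rcases hj.lt_or_eq with hj | hj
  · exact hj
  · obtain rfl : i = j := Fin.ext hj
    exact (hd.elim h1 h2).elim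

lemma IsSimplePath.fixCaps_succ {p : Fin (k+1) → V} (hP : G.IsSimplePath p dP) (i : Fin k) :
    G.fixCaps c0 M dP (i + 1) (dP i) = c0 (dP i) ∧
      G.fixCaps c0 M dP (i + 1) (G.rev (dP i)) = c0 (G.rev (dP i)) := by
  constructor <;> refine fixCaps_of_forall fun j hj => ⟨fun h => ?_, fun h => ?_⟩
  · obtain rfl := hP.dart_injective h
    omega
  · exact hP.ne_rev i j h
  · exact hP.ne_rev j i h.symm
  · obtain rfl := hP.dart_injective (G.rev_involutive.injective h)
    omega

lemma IsSimplePath.fixCaps_of_mem_inDarts [Fintype D] {p : Fin (k+1) → V}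
    (hP : G.IsSimplePath p dP) {m : Fin k} {d : D}
    (hd : d ∈ G.inDarts (p '' {l | m.castSucc < l})) (hdm : d ≠ dP m) (n : ℕ) :
    G.fixCaps c0 M dP n d = c0 d := by
  refine fixCaps_of_forall fun j _ => ⟨?_, ?_⟩ <;> rintro rfl <;>
    simp only [mem_inDarts, hP.head_eq, hP.tail_eq, G.head_rev, G.tail_rev,
      hP.injective.mem_set_image, Set.mem_ofPred_eq, Fin.lt_def, Fin.val_castSucc,
      Fin.val_succ] at hd
  · exact hdm (congrArg dP (Fin.ext (by omega)))
  · omega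

end FixCaps

section Truncate

variable [DecidableEq D] {G : Dgraph V D} {κ f : D → ℝ} {d0 : D}

lemma truncAt_apply_self :
    G.truncAt κ f d0 d0 = -min (-min (f d0) (κ d0)) (κ (G.rev d0)) := by
  simp [truncAt]

lemma truncAt_apply_rev (hne : G.rev d0 ≠ d0) :
    G.truncAt κ f d0 (G.rev d0) = min (-min (f d0) (κ d0)) (κ (G.rev d0)) := by
  simp [truncAt, hne]

lemma truncAt_apply_of_ne {d : D} (h1 : d ≠ d0) (h2 : d ≠ G.rev d0) :
    G.truncAt κ f d0 d = f d := by
  simp [truncAt, h1, h2]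

lemma truncAt_antisym (hf : G.Antisym f) (hne : G.rev d0 ≠ d0) :
    G.Antisym (G.truncAt κ f d0) := by
  intro d
  by_cases h1 : d = d0
  · subst h1
    rw [truncAt_apply_rev hne, truncAt_apply_self, neg_neg]
  by_cases h2 : d = G.rev d0
  · subst h2
    rw [G.rev_rev, truncAt_apply_rev hne, truncAt_apply_self]
  rw [truncAt_apply_of_ne h1 h2, truncAt_apply_of_ne (fun h => h2 (by rw [← h, G.rev_rev]))
    (fun h => h1 (G.rev_involutive.injective h)), hf d]

lemma truncAt_le (hne : G.rev d0 ≠ d0) (hκ : 0 ≤ κ d0 + κ (G.rev d0))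
    (hf : ∀ d, d ≠ d0 → d ≠ G.rev d0 → f d ≤ κ d) (d : D) : G.truncAt κ f d0 d ≤ κ d := by
  by_cases h1 : d = d0
  · subst h1
    rw [truncAt_apply_self]
    exact neg_le.2 (le_min (neg_le_neg (min_le_right _ _)) (by linarith))
  by_cases h2 : d = G.rev d0
  · subst h2
    rw [truncAt_apply_rev hne]
    exact min_le_right _ _
  rw [truncAt_apply_of_ne h1 h2]
  exact hf d h1 h2

lemma sub_pos_of_sub_truncAt_pos (hf : G.Antisym f) (hne : G.rev d0 ≠ d0) {d : D}
    (hd : 0 < κ d - G.truncAt κ f d0 d) : 0 < κ d - f d := by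
  by_cases h1 : d = d0
  · subst h1
    rw [truncAt_apply_self] at hd
    have h := min_le_left (-min (f d) (κ d)) (κ (G.rev d))
    have := (min_lt_iff.1 (by linarith : min (f d) (κ d) < κ d)).resolve_right (lt_irrefl _)
    linarith
  by_cases h2 : d = G.rev d0
  · subst h2
    rw [truncAt_apply_rev hne] at hd
    have := (min_lt_iff.1 (by linarith : min (-min (f d0) (κ d0)) (κ (G.rev d0)) < κ (G.rev d0))
      ).resolve_right (lt_irrefl _)
    rw [hf d0]
    linarith [min_le_left (f d0) (κ d0)]
  rwa [truncAt_apply_of_ne h1 h2] at hd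

lemma inflow_truncAt [Fintype D] [DecidableEq V] {v : V}
    (h1 : G.head d0 ≠ v) (h2 : G.tail d0 ≠ v) :
    G.inflow (G.truncAt κ f d0) v = G.inflow f v :=
  Finset.sum_congr rfl fun d hd => truncAt_apply_of_ne
    (fun h => h1 (h ▸ (Finset.mem_filter.1 hd).2))
    (fun h => h2 (by rw [← G.head_rev, ← h]; exact (Finset.mem_filter.1 hd).2))

end Truncate

section Saturation

variable [Fintype D] {G : Dgraph V D} {c0 f0 f : D → ℝ}

lemma Pseudoflow.cap_le_of_sum_cap_le (hc0 : ∀ d, 0 ≤ c0 d) (hf0 : G.Pseudoflow c0 f0)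
    {E : Finset D} (hE : ∀ d ∈ E, G.rev d ∉ E) (hle : ∀ d ∈ E, f d ≤ c0 d)
    (hsum : ∑ d, c0 d ≤ ∑ d ∈ E, (f d - f0 d)) : ∀ d ∈ E, c0 d ≤ f d := by
  have hterm : ∀ d ∈ E, f d - f0 d ≤ c0 d + c0 (G.rev d) := fun d hd => by
    linarith [hf0.1 d, hf0.2 (G.rev d), hle d hd]
  have hdisj : Disjoint E (E.map G.revPerm.toEmbedding) := Finset.disjoint_left.2 fun d hd hd' => by
    rw [Finset.mem_map_equiv, revPerm_symm, revPerm_apply] at hd'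
    exact hE _ hd' (by rwa [G.rev_rev])
  have htotal : ∑ d ∈ E, (c0 d + c0 (G.rev d)) ≤ ∑ d, c0 d := by
    classical
    have hmap : ∑ d ∈ E.map G.revPerm.toEmbedding, c0 d = ∑ d ∈ E, c0 (G.rev d) :=
      Finset.sum_map _ _ _
    rw [Finset.sum_add_distrib, ← hmap, ← Finset.sum_union hdisj]
    exact Finset.sum_le_sum_of_subset_of_nonneg (Finset.subset_univ _) fun d _ _ => hc0 d
  have heq := (Finset.sum_eq_sum_iff_of_le hterm).1
    (le_antisymm (Finset.sum_le_sum hterm) (by linarith))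
  intro d hd
  linarith [heq d hd, hf0.1 d, hf0.2 (G.rev d)]

variable [DecidableEq V] [DecidableEq D] {M : ℝ} {p : Fin (k+1) → V} {dP : Fin k → D}

lemma IsSimplePath.fixCaps_le_of_mem_inDarts (hP : G.IsSimplePath p dP) (hc0 : ∀ d, 0 ≤ c0 d)
    (hM : ∑ d, c0 d ≤ M) (hf0 : G.Pseudoflow c0 f0) {n : ℕ} (hf : G.Antisym f)
    (hle : ∀ d, f d ≤ G.fixCaps c0 M dP n d) {m : Fin k} (hnm : n ≤ m)
    (hinfl : ∀ l, m.castSucc < l → G.inflow f (p l) = G.inflow f0 (p l))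
    (hsat : G.fixCaps c0 M dP n (G.rev (dP m)) ≤ f (G.rev (dP m))) {d : D}
    (hd : d ∈ G.inDarts (p '' {l : Fin (k+1) | m.castSucc < l})) (hdm : d ≠ dP m) :
    G.fixCaps c0 M dP n d ≤ f d := by
  classical
  set X := p '' {l : Fin (k+1) | m.castSucc < l}
  have hdP : dP m ∈ G.inDarts X := mem_inDarts.2
    ⟨⟨m.succ, Fin.castSucc_lt_succ, (hP.head_eq m).symm⟩,
      by rw [hP.tail_eq, hP.injective.mem_set_image]; exact lt_irrefl m.castSucc⟩
  have hbal : ∑ e ∈ G.inDarts X, (f - f0) e = 0 := by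
    rw [sum_inDarts_eq (hf.sub hf0.1)]
    refine Finset.sum_eq_zero fun v hv => ?_
    obtain ⟨l, hl, rfl⟩ := (Finset.mem_filter.1 hv).2
    rw [inflow_sub, hinfl l hl, sub_self]
  have hexcess : M ≤ ∑ e ∈ (G.inDarts X).erase (dP m), (f e - f0 e) := by
    rw [← Finset.add_sum_erase _ _ hdP] at hbal
    rw [fixCaps_of_le hnm (Or.inr rfl)] at hsat
    simp only [Pi.sub_apply] at hbal
    linarith [hf (dP m), hf0.1 (dP m), hf0.2 (G.rev (dP m))]
  have hcap : ∀ e ∈ G.inDarts X, e ≠ dP m → G.fixCaps c0 M dP n e = c0 e :=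
    fun e he hem => hP.fixCaps_of_mem_inDarts he hem n
  rw [hcap d hd hdm]
  refine hf0.cap_le_of_sum_cap_le hc0
    (fun e he he' => rev_not_mem_inDarts (Finset.mem_of_mem_erase he) (Finset.mem_of_mem_erase he'))
    (fun e he => ?_) (hM.trans hexcess) d (Finset.mem_erase.2 ⟨hdm, hd⟩)
  obtain ⟨hem, he⟩ := Finset.mem_erase.1 he
  exact hcap e he hem ▸ hle e

lemma IsSimplePath.not_resReach_of_stage (hP : G.IsSimplePath p dP) (hc0 : ∀ d, 0 ≤ c0 d)
    (hM : ∑ d, c0 d ≤ M) (hf0 : G.Pseudoflow c0 f0) {s : Fin (k+1)} (hf : G.Antisym f)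
    (hle : ∀ d, f d ≤ G.fixCaps c0 M dP s d)
    (hinfl : ∀ l, s < l → G.inflow f (p l) = G.inflow f0 (p l)) {u : V}
    (hu : ∀ l, s < l → p l ≠ u) (hs : ¬ G.ResReach (G.fixCaps c0 M dP s - f) u (p s))
    {l : Fin (k+1)} (hsl : s ≤ l) : ¬ G.ResReach (G.fixCaps c0 M dP s - f) u (p l) := by
  set r := G.fixCaps c0 M dP s - f
  intro hreach
  obtain ⟨m, hsm, hml, hm, hm'⟩ :=
    Fin.exists_not_castSucc_and_succ (P := fun l => G.ResReach r u (p l)) hs hreach hsl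
  set X := p '' {l : Fin (k+1) | m.castSucc < l}
  have hsat : ∀ d ∈ G.inDarts X, d ≠ dP m → r d ≤ 0 := fun d hd hdm =>
    sub_nonpos.2 <| hP.fixCaps_le_of_mem_inDarts hc0 hM hf0 hf hle hsm
      (fun l hl => hinfl l (hsm.trans_lt hl)) (not_lt.1 fun hpos => hm <| hm'.tail
        ⟨G.rev (dP m), by rw [G.tail_rev, hP.head_eq], by rw [G.head_rev, hP.tail_eq],
          sub_pos.2 hpos⟩) hd hdm
  have hclosed : G.ResClosed r ({v | G.ResReach r u v} \ X) := by
    rintro d ⟨htR, htX⟩ hh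
    by_contra! hpos
    have hhR : G.ResReach r u (G.head d) := htR.tail ⟨d, rfl, rfl, hpos⟩
    have hhX : G.head d ∈ X := by
      by_contra h
      exact hh ⟨hhR, h⟩
    by_cases hdm : d = dP m
    · exact hm (by rw [← hP.tail_eq, ← hdm]; exact htR)
    · exact (hsat d (mem_inDarts.2 ⟨hhX, htX⟩) hdm).not_gt hpos
  have hu' : u ∈ {v | G.ResReach r u v} \ X :=
    ⟨Relation.ReflTransGen.refl, fun ⟨l', hl', he⟩ => hu l' (hsm.trans_lt hl') he⟩
  exact (hclosed.mem_of_resReach hu' hreach).2 ⟨l, hml, rfl⟩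

end Saturation

section Invariant

variable [Fintype D] [DecidableEq V] [DecidableEq D]

/-- `n` is the stage whose capacities are in force, `m` the number of processed path nodes. -/
structure ForwardInvariant (G : Dgraph V D) (c0 f0 : D → ℝ) (M : ℝ) (p : Fin (k+1) → V)
    (dP : Fin k → D) (n m : ℕ) (f : D → ℝ) : Prop where
  antisym : G.Antisym f
  le_fixCaps : ∀ d, f d ≤ G.fixCaps c0 M dP n d
  inflow_eq : ∀ l : Fin (k+1), n < (l : ℕ) → G.inflow f (p l) = G.inflow f0 (p l)
  not_resReach : ∀ j j' : Fin (k+1), (j : ℕ) < m → j < j' → 0 < G.inflow f (p j) →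
    ¬ G.ResReach (G.fixCaps c0 M dP n - f) (p j) (p j')

namespace ForwardInvariant

variable {G : Dgraph V D} {c0 f0 : D → ℝ} {M : ℝ} {p : Fin (k+1) → V} {dP : Fin k → D}

lemma zero (hM : 0 ≤ M) (hf0 : G.Pseudoflow c0 f0) :
    G.ForwardInvariant c0 f0 M p dP 0 0 f0 where
  antisym := hf0.1
  le_fixCaps d := (hf0.2 d).trans (Dgraph.le_fixCaps hM 0 d)
  inflow_eq _ _ := rfl
  not_resReach _ _ h := absurd h (Nat.not_lt_zero _)

lemma truncate (hp : Function.Injective p) {i : Fin k} {f t : D → ℝ}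
    (hf : G.ForwardInvariant c0 f0 M p dP i i f) (ht : G.Antisym t)
    (hle : ∀ d, t d ≤ G.fixCaps c0 M dP (i + 1) d)
    (hres : ∀ d, 0 < G.fixCaps c0 M dP (i + 1) d - t d → 0 < G.fixCaps c0 M dP i d - f d)
    (hinfl : ∀ v, v ≠ p i.castSucc → v ≠ p i.succ → G.inflow t v = G.inflow f v) :
    G.ForwardInvariant c0 f0 M p dP (i + 1) i t where
  antisym := ht
  le_fixCaps := hle
  inflow_eq l hl := by
    rw [hinfl _ (hp.ne (Fin.ne_of_val_ne (by simp only [Fin.val_castSucc]; omega)))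
      (hp.ne (Fin.ne_of_val_ne (by simp only [Fin.val_succ]; omega))), hf.inflow_eq l (by omega)]
  not_resReach j j' hj hjj' hpos h := by
    rw [hinfl _ (hp.ne (Fin.ne_of_val_ne (by simp only [Fin.val_castSucc]; omega)))
      (hp.ne (Fin.ne_of_val_ne (by simp only [Fin.val_succ]; omega)))] at hpos
    exact hf.not_resReach j j' hj hjj' hpos (resReach_mono hres h)

lemma push (hP : G.IsSimplePath p dP) (hc0 : ∀ d, 0 ≤ c0 d) (hM : ∑ d, c0 d ≤ M)
    (hf0 : G.Pseudoflow c0 f0) {i : Fin k} {t g : D → ℝ} {b : V}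
    (ht : G.ForwardInvariant c0 f0 M p dP (i + 1) i t) (hg : G.Antisym g)
    (hgle : ∀ d, g d ≤ G.fixCaps c0 M dP (i + 1) d - t d)
    (hcons : ∀ v, v ≠ p i.castSucc → v ≠ p i.succ → G.inflow g v = 0)
    (hb : b = p i.castSucc ∨ b = p i.succ) (hsink : ∀ v ≠ b, G.inflow g v ≤ 0)
    (hnew : 0 < G.inflow (t + g) (p i.castSucc) →
      ¬ G.ResReach (G.fixCaps c0 M dP (i + 1) - (t + g)) (p i.castSucc) (p i.succ)) :
    G.ForwardInvariant c0 f0 M p dP (i + 1) (i + 1) (t + g) := by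
  have hF : G.Antisym (t + g) := ht.antisym.add hg
  have hFle : ∀ d, (t + g) d ≤ G.fixCaps c0 M dP (i + 1) d := fun d => by
    simp only [Pi.add_apply]
    linarith [hgle d]
  have hFt : ∀ l : Fin (k+1), (l : ℕ) ≠ i → (l : ℕ) ≠ i + 1 →
      G.inflow (t + g) (p l) = G.inflow t (p l) := fun l h1 h2 => by
    rw [inflow_add, hcons _ (hP.injective.ne (Fin.ne_of_val_ne h1))
      (hP.injective.ne (Fin.ne_of_val_ne h2)), add_zero]
  have hFinfl : ∀ l : Fin (k+1), (i : ℕ) + 1 < l → G.inflow (t + g) (p l) = G.inflow f0 (p l) :=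
    fun l hl => by rw [hFt l (by omega) (by omega), ht.inflow_eq l hl]
  refine ⟨hF, hFle, hFinfl, fun j j' hj hjj' hpos => ?_⟩
  rcases Nat.lt_succ_iff_lt_or_eq.1 hj with hj | hj
  · rw [hFt j (by omega) (by omega)] at hpos
    have hsb : ¬ G.ResReach (G.fixCaps c0 M dP (i + 1) - t) (p j) b := by
      rcases hb with rfl | rfl
      exacts [ht.not_resReach j _ hj (Fin.lt_def.2 hj) hpos,
        ht.not_resReach j _ hj (Fin.lt_def.2 (by simp only [Fin.val_succ]; omega)) hpos]
    intro h
    rw [sub_add_eq_sub_sub] at h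
    exact ht.not_resReach j j' hj hjj' hpos (h.of_sub_of_not_resReach_sink hg hgle hsink hsb)
  · obtain rfl : j = i.castSucc := Fin.ext hj
    exact hP.not_resReach_of_stage (s := i.succ) hc0 hM hf0 hF hFle hFinfl
      (fun l hl => hP.injective.ne (Fin.castSucc_lt_succ.trans hl).ne') (hnew hpos)
      (Fin.castSucc_lt_iff_succ_le.1 hjj')

end ForwardInvariant

variable {G : Dgraph V D} {c0 f0 : D → ℝ} {M : ℝ} {p : Fin (k+1) → V} {dP : Fin k → D}

lemma IsSimplePath.forwardInvariant_truncAt (hP : G.IsSimplePath p dP) (hc0 : ∀ d, 0 ≤ c0 d)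
    (hM : 0 ≤ M) {i : Fin k} {f : D → ℝ} (hf : G.ForwardInvariant c0 f0 M p dP i i f)
    (hf' : G.reverse.ForwardInvariant c0 f0 M p (G.rev ∘ dP) i i f) {t : D → ℝ}
    (htf : t = G.truncAt (G.fixCaps c0 M dP (i + 1)) f (dP i)) :
    G.ForwardInvariant c0 f0 M p dP (i + 1) i t ∧
      G.reverse.ForwardInvariant c0 f0 M p (G.rev ∘ dP) (i + 1) i t := by
  subst htf
  obtain ⟨hκ, hκr⟩ := hP.fixCaps_succ (c0 := c0) (M := M) i
  have hne : G.rev (dP i) ≠ dP i := fun h => hP.ne_rev i i h.symm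
  set t := G.truncAt (G.fixCaps c0 M dP (i + 1)) f (dP i)
  have ht : G.Antisym t := truncAt_antisym hf.antisym hne
  have hle : ∀ d, t d ≤ G.fixCaps c0 M dP (i + 1) d :=
    truncAt_le hne (by rw [hκ, hκr]; linarith [hc0 (dP i), hc0 (G.rev (dP i))])
      fun d h1 h2 => by rw [fixCaps_succ_of_ne h1 h2]; exact hf.le_fixCaps d
  have hres : ∀ d, 0 < G.fixCaps c0 M dP (i + 1) d - t d → 0 < G.fixCaps c0 M dP i d - f d :=
    fun d hd => (sub_pos_of_sub_truncAt_pos hf.antisym hne hd).trans_le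
      (sub_le_sub_right (fixCaps_antitone hM (Nat.le_succ _) d) _)
  have hinfl : ∀ v, v ≠ p i.castSucc → v ≠ p i.succ → G.inflow t v = G.inflow f v :=
    fun v h1 h2 => inflow_truncAt (by rw [hP.head_eq]; exact h2.symm)
      (by rw [hP.tail_eq]; exact h1.symm)
  refine ⟨hf.truncate hP.injective ht hle hres hinfl,
    hf'.truncate hP.injective ht (by rwa [fixCaps_reverse]) (by rwa [fixCaps_reverse]) ?_⟩
  intro v h1 h2
  rw [inflow_reverse _ ht, inflow_reverse _ hf.antisym, hinfl v h1 h2]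

lemma IsSimplePath.forwardInvariant_fixStep (hP : G.IsSimplePath p dP) (hc0 : ∀ d, 0 ≤ c0 d)
    (hM : ∑ d, c0 d ≤ M) (hf0 : G.Pseudoflow c0 f0) {i : Fin k} {f f' : D → ℝ}
    (hf : G.ForwardInvariant c0 f0 M p dP i i f)
    (hf' : G.reverse.ForwardInvariant c0 f0 M p (G.rev ∘ dP) i i f)
    (hstep : G.FixStep c0 M p dP i f f') :
    G.ForwardInvariant c0 f0 M p dP (i + 1) (i + 1) f' ∧
      G.reverse.ForwardInvariant c0 f0 M p (G.rev ∘ dP) (i + 1) (i + 1) f' := by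
  have hM0 : 0 ≤ M := (Finset.sum_nonneg fun d _ => hc0 d).trans hM
  obtain ⟨t, g, htf, hpush, rfl⟩ := hstep
  obtain ⟨hT, hT'⟩ := hP.forwardInvariant_truncAt hc0 hM0 hf hf' htf
  have hcap : ∀ d, 0 ≤ G.fixCaps c0 M dP (i + 1) d - t d := fun d => sub_nonneg.2 (hT.le_fixCaps d)
  have hab : p i.castSucc ≠ p i.succ := hP.injective.ne Fin.castSucc_lt_succ.ne
  obtain ⟨hg_anti, hg_le, hg_cons⟩ : G.Antisym g ∧ (∀ d, g d ≤ G.fixCaps c0 M dP (i + 1) d - t d) ∧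
      ∀ v, v ≠ p i.castSucc → v ≠ p i.succ → G.inflow g v = 0 := by
    rcases hpush with ⟨-, hg⟩ | ⟨-, hg⟩
    exacts [⟨hg.1, hg.2.1, hg.2.2.1⟩, ⟨hg.1, hg.2.1, fun v h1 h2 => hg.2.2.1 v h2 h1⟩]
  have hle' : ∀ d, g d ≤ G.reverse.fixCaps c0 M (G.rev ∘ dP) (i + 1) d - t d := by
    rw [fixCaps_reverse]
    exact hg_le
  have hcons' : ∀ v, v ≠ p i.castSucc → v ≠ p i.succ → G.reverse.inflow g v = 0 :=
    fun v h1 h2 => by rw [inflow_reverse _ hg_anti, hg_cons v h1 h2, neg_zero]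
  rcases hpush with ⟨hpos, hg⟩ | ⟨hnonpos, hg⟩
  · have hsrc := hg.inflow_source hab
    refine ⟨hT.push hP hc0 hM hf0 hg_anti hg_le hg_cons (Or.inr rfl)
        (hg.inflow_nonpos_of_ne_target hab hcap hpos.le) fun hF => ?_,
      hT'.push hP.reverse hc0 hM hf0 hg_anti hle' hcons' (Or.inl rfl) (fun v hv => ?_)
        fun hF => ?_⟩
    · rw [inflow_add, hsrc] at hF
      rw [sub_add_eq_sub_sub]
      exact hg.not_resReach hab (by linarith)
    · rw [inflow_reverse _ hg_anti]
      exact neg_nonpos.2 (hg.inflow_nonneg_of_ne_source hcap hpos.le v hv)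
    · rw [inflow_reverse _ (hT.antisym.add hg_anti), inflow_add, hsrc] at hF
      linarith [hg.2.2.2.1]
  · have hx : 0 ≤ -G.inflow t (p i.castSucc) := neg_nonneg.2 hnonpos
    refine ⟨hT.push hP hc0 hM hf0 hg_anti hg_le hg_cons (Or.inl rfl)
        (hg.inflow_nonpos_of_ne_target hab.symm hcap hx) fun hF => ?_,
      hT'.push hP.reverse hc0 hM hf0 hg_anti hle' hcons' (Or.inr rfl) (fun v hv => ?_)
        fun hF => ?_⟩
    · rw [inflow_add] at hF
      linarith [hg.2.2.2.1]
    · rw [inflow_reverse _ hg_anti]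
      exact neg_nonpos.2 (hg.inflow_nonneg_of_ne_source hcap hx v hv)
    · rw [inflow_reverse _ (hT.antisym.add hg_anti), inflow_add] at hF
      rw [fixCaps_reverse, resReach_reverse, sub_add_eq_sub_sub]
      exact hg.not_resReach hab.symm (by linarith)

end Invariant

end Dgraph

/-- invariant of the abstract path-fixing algorithm after `i` iterations. -/
theorem stmt13 {V D : Type} [Fintype D] [DecidableEq V] [DecidableEq D]
    (G : Dgraph V D) (c0 : D → ℝ) (hc0 : ∀ d, 0 ≤ c0 d)
    (k : ℕ) (p : Fin (k+1) → V) (hp : Function.Injective p)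
    (dP : Fin k → D)
    (hdt : ∀ i, G.tail (dP i) = p i.castSucc) (hdh : ∀ i, G.head (dP i) = p i.succ)
    (f0 : D → ℝ) (hf0 : G.Pseudoflow c0 f0)
    (M : ℝ) (hM : M = ∑ d : D, c0 d)
    (f : ℕ → D → ℝ) (hinit : f 0 = f0)
    (hstep : ∀ i : Fin k, G.FixStep c0 M p dP i (f (i : ℕ)) (f ((i : ℕ) + 1)))
    (i : ℕ) (hi : i ≤ k) :
    (∀ j j' : Fin (k+1), (j : ℕ) < i → j < j' →
      (0 < G.inflow (f i) (p j) →
        ¬ G.ResReach (fun d => G.fixCaps c0 M dP i d - f i d) (p j) (p j')) ∧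
      (G.inflow (f i) (p j) < 0 →
        ¬ G.ResReach (fun d => G.fixCaps c0 M dP i d - f i d) (p j') (p j))) ∧
    (∀ j j' : Fin (k+1), (j : ℕ) < i → (j' : ℕ) < i →
      0 < G.inflow (f i) (p j) → G.inflow (f i) (p j') < 0 →
      ¬ G.ResReach (fun d => G.fixCaps c0 M dP i d - f i d) (p j) (p j')) := by
  have hP : G.IsSimplePath p dP := ⟨hp, hdt, hdh⟩
  have hM0 : 0 ≤ M := hM ▸ Finset.sum_nonneg fun d _ => hc0 d
  have hinv : ∀ n ≤ k, G.ForwardInvariant c0 f0 M p dP n n (f n) ∧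
      G.reverse.ForwardInvariant c0 f0 M p (G.rev ∘ dP) n n (f n) := by
    intro n hn
    induction n with
    | zero =>
      rw [hinit]
      exact ⟨.zero hM0 hf0, .zero hM0 hf0⟩
    | succ n ih =>
      obtain ⟨h, h'⟩ := ih (by omega)
      exact hP.forwardInvariant_fixStep (i := ⟨n, hn⟩) hc0 hM.ge hf0 h h' (hstep ⟨n, hn⟩)
  obtain ⟨hfwd, hbwd⟩ := hinv i hi
  have hback : ∀ j j' : Fin (k+1), (j : ℕ) < i → j < j' → G.inflow (f i) (p j) < 0 →
      ¬ G.ResReach (fun d => G.fixCaps c0 M dP i d - f i d) (p j') (p j) := by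
    intro j j' hj hjj' hneg
    have h := hbwd.not_resReach j j' hj hjj'
      (by rw [Dgraph.inflow_reverse _ hfwd.antisym]; linarith)
    rwa [Dgraph.fixCaps_reverse, Dgraph.resReach_reverse] at h
  refine ⟨fun j j' hj hjj' => ⟨hfwd.not_resReach j j' hj hjj', hback j j' hj hjj'⟩,
    fun j j' hj hj' hpos hneg => ?_⟩
  rcases lt_trichotomy j j' with h | rfl | h
  · exact hfwd.not_resReach j j' hj h hpos
  · linarith
  · exact hback j' j hj' h hneg
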